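/- Let s ∈ (0,1) and q ≥ 1/s − 1. Let Ω be a domain contained in {(z,w) ∈ ℂ² : |z| < 4, 1 < |w| < 6} whose fibers Ω_w := {z ∈ ℂ : (z,w) ∈ Ω} depend only on |w| and which satisfies, for some ε ∈ (0,1/2) and c > 0: (i) Ω_w ∩ {|z| ≤ c} = ∅ whenever ||w|−3| ≥ ε and ||w|−4| ≥ ε; (ii) for t := |w|−3 with 0 < |t| ≤ ε, one has {z : e^{−|t|^{−s}} < |z| < 1} ⊆ Ω_w ⊆ {z : (1/2)e^{−2|t|^{−s}} < |z| < 4}; (iii) for t := |w|−4 with 0 < |t| ≤ ε, one has Ω_w ⊆ {z : (1/2)e^{−2|t|^{−s}} < |z| < 4}. Then the function (z,w) ↦ 1/z satisfies ∫_Ω |1/z|² dλ < ∞ (so 1/z ∈ A²(Ω)) but ∫_Ω |1/z|² (log⁺(1/|z|))^q dλ = ∞ (so 1/z ∉ A²(log A)^q(Ω)). -/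

import Mathlib

open MeasureTheory Metric Set
open scoped ENNReal

noncomputable section

/-- Lebesgue measure on `ℂⁿ = EuclideanSpace ℂ (Fin n)` (defeq to the product measure). -/
instance (n : ℕ) : MeasureSpace (EuclideanSpace ℂ (Fin n)) :=
  { volume := Measure.map (WithLp.toLp 2) (volume : Measure (Fin n → ℂ)) }

variable {E : Type*} [NormedAddCommGroup E] [NormedSpace ℂ E]

/-- Euclidean distance to the boundary `∂Ω`. -/
def bdist (Ω : Set E) (z : E) : ℝ := Metric.infDist z (frontier Ω)

/-- `u` is plurisubharmonic on `Ω`: upper semicontinuous on `Ω`, and satisfying the sub-mean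
value inequality over circles in every complex line (whenever the corresponding closed disc is
contained in `Ω`). -/
def PSHOn (u : E → ℝ) (Ω : Set E) : Prop :=
  UpperSemicontinuousOn u Ω ∧
  ∀ z ∈ Ω, ∀ v : E, ∀ r : ℝ, 0 < r →
    (∀ w : ℂ, ‖w‖ ≤ r → z + w • v ∈ Ω) →
    u z ≤ (1 / (2 * Real.pi)) *
      ∫ θ in (0:ℝ)..(2 * Real.pi), u (z + ((r : ℂ) * Complex.exp ((θ : ℂ) * Complex.I)) • v)

/-- A domain is pseudoconvex if `-log δ` is plurisubharmonic on it. -/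
def Pseudoconvex (Ω : Set E) : Prop :=
  PSHOn (fun z => -Real.log (bdist Ω z)) Ω

/-- The set of exponents `α ≥ 0` admitting a continuous negative plurisubharmonic `ρ` on `Ω`
with `-ρ ≤ C (-log δ)^{-α}` near `∂Ω`. -/
def logHypSet (Ω : Set E) : Set ℝ :=
  {α : ℝ | 0 ≤ α ∧ ∃ ρ : E → ℝ, ContinuousOn ρ Ω ∧ PSHOn ρ Ω ∧ (∀ z ∈ Ω, ρ z < 0) ∧
    ∃ C > (0:ℝ), ∃ ε > (0:ℝ), ∀ z ∈ Ω, bdist Ω z < ε →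
      -ρ z ≤ C * (-Real.log (bdist Ω z)) ^ (-α)}

/-- The log-hyperconvexity index `α_l(Ω)` (as an extended real number). -/
def logHypIndex (Ω : Set E) : EReal := sSup ((fun α : ℝ => (α : EReal)) '' logHypSet Ω)

/-- `log⁺ t = max (log t) 0`. -/
def logPlus (t : ℝ) : ℝ := max (Real.log t) 0

variable [MeasureSpace E]

/-- Membership in the Bergman space `A²(Ω)`. -/
def MemA2 (Ω : Set E) (f : E → ℂ) : Prop :=
  DifferentiableOn ℂ f Ω ∧ (∫⁻ z in Ω, ENNReal.ofReal (‖f z‖ ^ 2)) < ⊤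

/-- Membership in `A²(log A)^q(Ω)`. -/
def MemA2LogA (Ω : Set E) (q : ℝ) (f : E → ℂ) : Prop :=
  DifferentiableOn ℂ f Ω ∧
    (∫⁻ z in Ω, ENNReal.ofReal (‖f z‖ ^ 2 * logPlus ‖f z‖ ^ q)) < ⊤

/-- `K` is the Bergman kernel of `Ω`: for each `w ∈ Ω`, `K(·,w) ∈ A²(Ω)`, and `K` reproduces
every element of `A²(Ω)`. -/
def IsBergmanKernel (Ω : Set E) (K : E → E → ℂ) : Prop :=
  (∀ w ∈ Ω, MemA2 Ω (fun z => K z w)) ∧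
  ∀ f, MemA2 Ω f → ∀ w ∈ Ω, f w = ∫ z in Ω, f z * (starRingEnd ℂ) (K z w)

/-!
By Fubini in `(z, w)`, both integrals are integrals over `w` of planar integrals over the fibres
`Ω_w`, on which the integrands are radial in `z`. Since `∫_{a<|z|<4} |z|⁻² = 2π log (4/a)`, the
inner radius `½ e^{-2|t|^{-s}}` of the fibres near `|w| ∈ {3, 4}` makes the inner integral
`O(|t|^{-s})`, which is integrable in `w` as `s < 1`: so `1/z ∈ A²(Ω)`. For `|w| = 3 + t` the
fibre contains `{e^{-T} < |z| < 1}`, `T = t^{-s}`, and on its part `|z| < e^{-T/2}` the weight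
`(log⁺ 1/|z|)^q` is at least `(T/2)^q`; so the inner integral of `|z|⁻² (log⁺ 1/|z|)^q` is at least
`2π (T/2)^{q+1} ≳ t^{-s(q+1)} ≥ t⁻¹` when `q ≥ 1/s - 1`, and `t⁻¹` is not integrable.
Finally `z ≠ 0` on `Ω`: the fibres over `|w| ∉ {3, 4}` avoid `0`, and `Ω` is open.
-/

open Real

theorem lintegral_inv_Ioo {a b : ℝ} (ha : 0 < a) (hab : a ≤ b) :
    ∫⁻ r in Ioo a b, ENNReal.ofReal r⁻¹ = ENNReal.ofReal (log b - log a) := by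
  have h0 : (0 : ℝ) ∉ uIcc a b := by rw [uIcc_of_le hab]; exact fun h => ha.not_ge h.1
  have hint : IntegrableOn (fun r : ℝ => r⁻¹) (Ioo a b) :=
    ((intervalIntegrable_iff_integrableOn_Ioo_of_le hab).1
      (intervalIntegrable_inv_iff.2 (Or.inr h0)))
  rw [← ofReal_integral_eq_lintegral_ofReal hint
      ((ae_restrict_mem measurableSet_Ioo).mono fun r hr => inv_nonneg.2 (ha.trans hr.1).le),
    ← integral_Ioc_eq_integral_Ioo, ← intervalIntegral.integral_of_le hab, integral_inv h0,
    log_div (ha.trans_le hab).ne' ha.ne']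

theorem lintegral_sub_inv_Ioo_eq_top (m : ℝ) {ε : ℝ} (hε : 0 < ε) :
    ∫⁻ r in Ioo m (m + ε), ENNReal.ofReal (r - m)⁻¹ = ⊤ := by
  have hle : m ≤ m + ε := by linarith
  have hnot : ¬ IntegrableOn (fun r : ℝ => (r - m)⁻¹) (Ioo m (m + ε)) := by
    rw [← intervalIntegrable_iff_integrableOn_Ioo_of_le hle, intervalIntegrable_sub_inv_iff,
      uIcc_of_le hle]
    simp [hε.ne', hε.le]
  by_contra h
  refine hnot ⟨by fun_prop, ?_⟩
  rwa [hasFiniteIntegral_iff_ofReal, lt_top_iff_ne_top]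
  exact (ae_restrict_mem measurableSet_Ioo).mono fun r hr => inv_nonneg.2 (sub_nonneg.2 hr.1.le)

theorem integrableOn_abs_rpow_ball {r : ℝ} (hr : -1 < r) (R : ℝ) :
    IntegrableOn (fun x : ℝ => |x| ^ r) (Metric.ball 0 R) := by
  rcases le_or_gt R 0 with hR | hR
  · simp [Metric.ball_eq_empty.2 hR]
  have := (integrableOn_fun_norm_addHaar (volume : Measure ℝ) (f := fun y : ℝ => y ^ r) (r := R)).2
    (by simpa using (intervalIntegral.integrableOn_Ioo_rpow_iff hR).2 hr)
  simpa [Real.norm_eq_abs] using this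

theorem integrableOn_abs_sub_rpow {r : ℝ} (hr : -1 < r) (m a b : ℝ) :
    IntegrableOn (fun x : ℝ => |x - m| ^ r) (Ioo a b) := by
  have := (measurePreserving_sub_right volume m).integrableOn_comp_preimage
    (measurableEmbedding_subRight m) |>.2 (integrableOn_abs_rpow_ball hr (|a - m| + |b - m|))
  refine this.mono_set fun x hx => ?_
  simp only [mem_preimage, Metric.mem_ball, dist_zero_right, Real.norm_eq_abs]
  rw [abs_lt]
  constructor <;> cases abs_cases (a - m) <;> cases abs_cases (b - m) <;> linarith [hx.1, hx.2]

theorem two_rpow_neg_mul_inv_le {s p t : ℝ} (ht0 : 0 < t) (ht1 : t ≤ 1) (hsp : 1 ≤ s * p) :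
    2 ^ (-p) * t⁻¹ ≤ (t ^ (-s) / 2) ^ p := by
  rw [div_rpow (by positivity) zero_le_two, ← rpow_mul ht0.le, rpow_neg zero_le_two,
    div_eq_inv_mul, ← rpow_neg_one t]
  exact mul_le_mul_of_nonneg_left (rpow_le_rpow_of_exponent_ge ht0 ht1 (by linarith))
    (by positivity)

@[fun_prop]
theorem measurable_logPlus : Measurable logPlus :=
  measurable_log.max measurable_const

def annulus (a b : ℝ) : Set ℂ := (‖·‖) ⁻¹' Ioo a b

theorem mem_annulus {a b : ℝ} {z : ℂ} : z ∈ annulus a b ↔ a < ‖z‖ ∧ ‖z‖ < b := Iff.rfl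

theorem measurableSet_annulus (a b : ℝ) : MeasurableSet (annulus a b) :=
  measurableSet_Ioo.preimage continuous_norm.measurable

theorem lintegral_comp_norm_complex {G : ℝ → ℝ≥0∞} (hG : Measurable G) :
    ∫⁻ z : ℂ, G ‖z‖ = ENNReal.ofReal (2 * π) * ∫⁻ r in Ioi 0, ENNReal.ofReal r * G r := by
  calc ∫⁻ z : ℂ, G ‖z‖
      = ∫⁻ p in polarCoord.target, (ENNReal.ofReal p.1 * G p.1) * 1 := by
        rw [← Complex.lintegral_comp_polarCoord_symm]
        refine setLIntegral_congr_fun polarCoord.open_target.measurableSet fun p hp => ?_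
        rw [Complex.norm_polarCoord_symm, abs_of_pos hp.1, smul_eq_mul, mul_one]
    _ = _ := by
      rw [polarCoord_target, Measure.volume_eq_prod, ← Measure.prod_restrict,
        lintegral_prod_mul (f := fun r => ENNReal.ofReal r * G r) (g := fun _ => 1)
          (by fun_prop) aemeasurable_const, lintegral_one,
        Measure.restrict_apply_univ, Real.volume_Ioo, mul_comm]
      congr 2; ring

theorem lintegral_annulus {G : ℝ → ℝ≥0∞} (hG : Measurable G) {a : ℝ} (ha : 0 ≤ a) (b : ℝ) :
    ∫⁻ z in annulus a b, G ‖z‖ =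
      ENNReal.ofReal (2 * π) * ∫⁻ r in Ioo a b, ENNReal.ofReal r * G r := by
  have hind : ∀ r, ENNReal.ofReal r * (Ioo a b).indicator G r =
      (Ioo a b).indicator (fun r => ENNReal.ofReal r * G r) r := fun r =>
    (indicator_mul_right _ _ _).symm
  have hsub : Ioo a b ⊆ Ioi 0 := fun r hr => ha.trans_lt hr.1
  rw [← lintegral_indicator (measurableSet_annulus a b)]
  refine (lintegral_comp_norm_complex (hG.indicator measurableSet_Ioo (s := Ioo a b))).trans ?_
  simp_rw [hind]
  rw [lintegral_indicator measurableSet_Ioo, Measure.restrict_restrict measurableSet_Ioo,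
    inter_eq_left.2 hsub]

theorem lintegral_annulus_inv_norm_sq {a b : ℝ} (ha : 0 < a) (hab : a ≤ b) :
    ∫⁻ z in annulus a b, ENNReal.ofReal (‖z‖⁻¹ ^ 2) =
      ENNReal.ofReal (2 * π * (log b - log a)) := by
  rw [lintegral_annulus (G := fun r => ENNReal.ofReal (r⁻¹ ^ 2)) (by fun_prop) ha.le,
    ENNReal.ofReal_mul (p := 2 * π) (q := log b - log a) (by positivity),
    ← lintegral_inv_Ioo ha hab]
  congr 1
  refine setLIntegral_congr_fun measurableSet_Ioo fun r hr => ?_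
  have hr0 : 0 < r := ha.trans hr.1
  rw [← ENNReal.ofReal_mul hr0.le]
  congr 1
  field_simp

theorem lintegral_annulus_lt_top {g : ℝ → ℝ} (hgm : Measurable g) {a b : ℝ} (ha : 0 ≤ a)
    (hg : IntegrableOn g (Ioo a b)) :
    ∫⁻ z in annulus a b, ENNReal.ofReal (g ‖z‖) < ⊤ := by
  rw [lintegral_annulus (G := fun r => ENNReal.ofReal (g r)) (by fun_prop) ha]
  refine ENNReal.mul_lt_top ENNReal.ofReal_lt_top (lt_of_le_of_lt ?_
    (ENNReal.mul_lt_top (ENNReal.ofReal_lt_top (r := b)) hg.lintegral_lt_top))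
  rw [← lintegral_const_mul _ (by fun_prop)]
  exact setLIntegral_mono (by fun_prop) fun r hr => by gcongr; exact hr.2.le

theorem lintegral_annulus_inv_sub_eq_top {m ε k : ℝ} (hm : 0 < m) (hε : 0 < ε) (hk : 0 < k) :
    ∫⁻ w in annulus m (m + ε), ENNReal.ofReal (k * (‖w‖ - m)⁻¹) = ⊤ := by
  rw [lintegral_annulus (G := fun r => ENNReal.ofReal (k * (r - m)⁻¹)) (by fun_prop) hm.le,
    eq_top_iff]
  calc ⊤ = ENNReal.ofReal (2 * π) * (ENNReal.ofReal (m * k) *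
        ∫⁻ r in Ioo m (m + ε), ENNReal.ofReal (r - m)⁻¹) := by
        rw [lintegral_sub_inv_Ioo_eq_top m hε, ENNReal.mul_top (by simp [hm, hk]),
          ENNReal.mul_top (by simp [pi_pos])]
    _ ≤ _ := by
      rw [← lintegral_const_mul _ (by fun_prop : Measurable fun r => ENNReal.ofReal (r - m)⁻¹)]
      refine mul_le_mul_right (setLIntegral_mono' measurableSet_Ioo fun r hr => ?_) _
      have hrm : 0 < r - m := sub_pos.2 hr.1
      rw [← ENNReal.ofReal_mul (by positivity), ← ENNReal.ofReal_mul (hm.trans hr.1).le,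
        ← mul_assoc]
      gcongr
      exact hr.1.le

theorem le_lintegral_annulus_inv_norm_sq_mul_logPlus {q T : ℝ} (hq : 0 ≤ q) (hT : 0 < T) :
    ENNReal.ofReal (2 * π * (T / 2) ^ (q + 1)) ≤
      ∫⁻ z in annulus (exp (-T)) 1, ENNReal.ofReal (‖z‖⁻¹ ^ 2 * logPlus ‖z‖⁻¹ ^ q) := by
  have hlog : ∀ z ∈ annulus (exp (-T)) (exp (-(T / 2))), T / 2 ≤ logPlus ‖z‖⁻¹ := by
    intro z hz
    refine le_max_of_le_left ?_
    rw [log_inv, le_neg, ← log_exp (-(T / 2))]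
    exact log_le_log (exp_pos _ |>.trans hz.1) hz.2.le
  calc ENNReal.ofReal (2 * π * (T / 2) ^ (q + 1))
      = ∫⁻ z in annulus (exp (-T)) (exp (-(T / 2))), ENNReal.ofReal ((T / 2) ^ q) *
          ENNReal.ofReal (‖z‖⁻¹ ^ 2) := by
        rw [lintegral_const_mul _ (by fun_prop), lintegral_annulus_inv_norm_sq (exp_pos _)
          (exp_le_exp.2 (by linarith)), log_exp, log_exp, ← ENNReal.ofReal_mul (by positivity),
          rpow_add_one (by positivity)]
        congr 1; ring
    _ ≤ ∫⁻ z in annulus (exp (-T)) (exp (-(T / 2))),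
          ENNReal.ofReal (‖z‖⁻¹ ^ 2 * logPlus ‖z‖⁻¹ ^ q) := by
        refine setLIntegral_mono' (measurableSet_annulus _ _) fun z hz => ?_
        rw [← ENNReal.ofReal_mul (by positivity), mul_comm]
        gcongr
        exact hlog z hz
    _ ≤ _ := lintegral_mono_set fun z hz =>
        mem_annulus.2 ⟨hz.1, hz.2.trans (by simpa using hT)⟩

theorem ae_norm_ne (r : ℝ) : ∀ᵐ w : ℂ, ‖w‖ ≠ r := by
  have := Measure.addHaar_sphere (volume : Measure ℂ) 0 r
  rw [measure_eq_zero_iff_ae_notMem] at this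
  simpa using this

theorem IsOpen.exists_mem_norm_ne {U : Set ℂ} (hU : IsOpen U) (hne : U.Nonempty) (r r' : ℝ) :
    ∃ w ∈ U, ‖w‖ ≠ r ∧ ‖w‖ ≠ r' := by
  have : (ae (volume.restrict U)).NeBot :=
    ae_neBot.2 (Measure.restrict_eq_zero.not.2 (hU.measure_pos volume hne).ne')
  exact ((ae_restrict_mem hU.measurableSet).and
    (ae_restrict_of_ae ((ae_norm_ne r).and (ae_norm_ne r')))).exists

theorem setLIntegral_prod_eq_lintegral_fiber {α β : Type*} [MeasurableSpace α]
    [MeasurableSpace β] {μ : Measure α} {ν : Measure β} [SFinite μ] [SFinite ν]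
    {S : Set (α × β)} (hS : MeasurableSet S) {g : α → ℝ≥0∞} (hg : Measurable g) :
    ∫⁻ p in S, g p.1 ∂μ.prod ν = ∫⁻ y, ∫⁻ x in {x | (x, y) ∈ S}, g x ∂μ ∂ν := by
  rw [← lintegral_indicator hS, lintegral_prod_symm' (fun p => S.indicator (fun p => g p.1) p)
    ((hg.comp measurable_fst).indicator hS)]
  congr 1 with y
  rw [← lintegral_indicator (s := {x | (x, y) ∈ S}) (measurable_prodMk_right hS)]
  refine lintegral_congr fun x => ?_
  by_cases hx : (x, y) ∈ S <;> simp [hx]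

/-- A lower bound, valid in all three regimes of the hypotheses, for the inner radius of the
fibre `Ω_w` with `r = |w|`. -/
def innerRadius (s c r : ℝ) : ℝ :=
  min c (min ((1/2) * exp (-2 * |r - 3| ^ (-s))) ((1/2) * exp (-2 * |r - 4| ^ (-s))))

theorem innerRadius_pos {s c : ℝ} (hc : 0 < c) (r : ℝ) : 0 < innerRadius s c r := by
  unfold innerRadius
  exact lt_min hc (lt_min (by positivity) (by positivity))

theorem innerRadius_le_half (s c r : ℝ) : innerRadius s c r ≤ 1 / 2 := by
  refine (min_le_right _ _).trans ((min_le_left _ _).trans ?_)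
  have : exp (-2 * |r - 3| ^ (-s)) ≤ 1 :=
    exp_le_one_iff.2 (by nlinarith [rpow_nonneg (abs_nonneg (r - 3)) (-s)])
  linarith

@[fun_prop]
theorem measurable_innerRadius (s c : ℝ) : Measurable (innerRadius s c) := by
  unfold innerRadius; fun_prop

theorem neg_log_half_mul_exp (x : ℝ) : -log ((1/2) * exp (-2 * x)) = log 2 + 2 * x := by
  rw [log_mul (by norm_num) (exp_pos _).ne', log_exp, one_div, log_inv]; ring

theorem neg_log_innerRadius_le (s c r : ℝ) :
    -log (innerRadius s c r) ≤
      |log c| + (log 2 + 2 * |r - 3| ^ (-s)) + (log 2 + 2 * |r - 4| ^ (-s)) := by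
  have h3 : 0 ≤ log 2 + 2 * |r - 3| ^ (-s) := by positivity
  have h4 : 0 ≤ log 2 + 2 * |r - 4| ^ (-s) := by positivity
  unfold innerRadius
  rcases min_choice c (min ((1/2) * exp (-2 * |r - 3| ^ (-s))) ((1/2) * exp (-2 * |r - 4| ^ (-s))))
    with h | h <;> rw [h]
  · linarith [neg_le_abs (log c)]
  · rcases min_choice ((1/2) * exp (-2 * |r - 3| ^ (-s))) ((1/2) * exp (-2 * |r - 4| ^ (-s)))
      with h' | h' <;> rw [h', neg_log_half_mul_exp] <;> linarith [abs_nonneg (log c)]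

theorem integrableOn_log_four_sub_log_innerRadius {s c : ℝ} (hs : s < 1) (hc : 0 < c) (a b : ℝ) :
    IntegrableOn (fun r => log 4 - log (innerRadius s c r)) (Ioo a b) := by
  have hint : ∀ m, IntegrableOn (fun r => |r - m| ^ (-s)) (Ioo a b) :=
    fun m => integrableOn_abs_sub_rpow (by linarith) m a b
  have hbound : IntegrableOn (fun r => log 4 + (|log c| + (log 2 + 2 * |r - 3| ^ (-s)) +
      (log 2 + 2 * |r - 4| ^ (-s)))) (Ioo a b) := by
    have hconst : ∀ C : ℝ, IntegrableOn (fun _ => C) (Ioo a b) := fun C =>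
      integrableOn_const (by simp [Real.volume_Ioo])
    exact (hconst _).add (((hconst _).add ((hconst _).add ((hint 3).const_mul 2))).add
      ((hconst _).add ((hint 4).const_mul 2)))
  refine hbound.mono' (by fun_prop : Measurable _).aestronglyMeasurable (.of_forall fun r => ?_)
  have h0 : log (innerRadius s c r) ≤ log 4 :=
    log_le_log (innerRadius_pos hc r) ((innerRadius_le_half s c r).trans (by norm_num))
  rw [Real.norm_eq_abs, abs_of_nonneg (by linarith)]
  linarith [neg_log_innerRadius_le s c r]

theorem fiber_subset_annulus_innerRadius {s ε c : ℝ} {Ω : Set (ℂ × ℂ)}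
    (hsub : Ω ⊆ {p : ℂ × ℂ | ‖p.1‖ < 4 ∧ 1 < ‖p.2‖ ∧ ‖p.2‖ < 6})
    (h1 : ∀ w : ℂ, ε ≤ |‖w‖ - 3| → ε ≤ |‖w‖ - 4| → ∀ z : ℂ, ‖z‖ ≤ c → (z, w) ∉ Ω)
    (h2 : ∀ w : ℂ, 0 < |‖w‖ - 3| → |‖w‖ - 3| ≤ ε →
      {z : ℂ | (z, w) ∈ Ω} ⊆ {z : ℂ | (1/2) * exp (-2 * |‖w‖ - 3| ^ (-s)) < ‖z‖ ∧ ‖z‖ < 4})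
    (h3 : ∀ w : ℂ, 0 < |‖w‖ - 4| → |‖w‖ - 4| ≤ ε →
      {z : ℂ | (z, w) ∈ Ω} ⊆ {z : ℂ | (1/2) * exp (-2 * |‖w‖ - 4| ^ (-s)) < ‖z‖ ∧ ‖z‖ < 4})
    {w : ℂ} (hw3 : ‖w‖ ≠ 3) (hw4 : ‖w‖ ≠ 4) :
    {z : ℂ | (z, w) ∈ Ω} ⊆ annulus (innerRadius s c ‖w‖) 4 := by
  intro z hz
  refine mem_annulus.2 ⟨?_, (hsub hz).1⟩
  rcases le_or_gt |‖w‖ - 3| ε with hε3 | hε3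
  · exact (min_le_right _ _).trans_lt <| (min_le_left _ _).trans_lt
      (h2 w (abs_pos.2 (sub_ne_zero.2 hw3)) hε3 hz).1
  rcases le_or_gt |‖w‖ - 4| ε with hε4 | hε4
  · exact (min_le_right _ _).trans_lt <| (min_le_right _ _).trans_lt
      (h3 w (abs_pos.2 (sub_ne_zero.2 hw4)) hε4 hz).1
  · exact (min_le_left _ _).trans_lt (not_le.1 fun hzc => h1 w hε3.le hε4.le z hzc hz)

theorem IsOpen.fst_ne_zero_of_mem {Ω : Set (ℂ × ℂ)} (hΩ : IsOpen Ω) {r r' : ℝ}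
    (h : ∀ w : ℂ, ‖w‖ ≠ r → ‖w‖ ≠ r' → ((0 : ℂ), w) ∉ Ω) {p : ℂ × ℂ} (hp : p ∈ Ω) :
    p.1 ≠ 0 := by
  intro h0
  have hU : IsOpen {w : ℂ | ((0 : ℂ), w) ∈ Ω} := hΩ.preimage (by fun_prop)
  obtain ⟨w, hw, hwr, hwr'⟩ := hU.exists_mem_norm_ne ⟨p.2, by simpa [← h0] using hp⟩ r r'
  exact h w hwr hwr' hw

theorem lintegral_inv_norm_sq_lt_top {s ε c : ℝ} {Ω : Set (ℂ × ℂ)} (hΩ : MeasurableSet Ω)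
    (hs : s < 1) (hc : 0 < c)
    (hsub : Ω ⊆ {p : ℂ × ℂ | ‖p.1‖ < 4 ∧ 1 < ‖p.2‖ ∧ ‖p.2‖ < 6})
    (h1 : ∀ w : ℂ, ε ≤ |‖w‖ - 3| → ε ≤ |‖w‖ - 4| → ∀ z : ℂ, ‖z‖ ≤ c → (z, w) ∉ Ω)
    (h2 : ∀ w : ℂ, 0 < |‖w‖ - 3| → |‖w‖ - 3| ≤ ε →
      {z : ℂ | (z, w) ∈ Ω} ⊆ {z : ℂ | (1/2) * exp (-2 * |‖w‖ - 3| ^ (-s)) < ‖z‖ ∧ ‖z‖ < 4})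
    (h3 : ∀ w : ℂ, 0 < |‖w‖ - 4| → |‖w‖ - 4| ≤ ε →
      {z : ℂ | (z, w) ∈ Ω} ⊆ {z : ℂ | (1/2) * exp (-2 * |‖w‖ - 4| ^ (-s)) < ‖z‖ ∧ ‖z‖ < 4}) :
    ∫⁻ p in Ω, ENNReal.ofReal (‖p.1‖⁻¹ ^ 2) < ⊤ := by
  let g : ℝ → ℝ := fun r => 2 * π * (log 4 - log (innerRadius s c r))
  have hfiber : ∀ᵐ w : ℂ, ∫⁻ z in {z | (z, w) ∈ Ω}, ENNReal.ofReal (‖z‖⁻¹ ^ 2) ≤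
      (annulus 1 6).indicator (fun w => ENNReal.ofReal (g ‖w‖)) w := by
    filter_upwards [ae_norm_ne 3, ae_norm_ne 4] with w hw3 hw4
    by_cases hw : w ∈ annulus 1 6
    · rw [indicator_of_mem hw, ← lintegral_annulus_inv_norm_sq (innerRadius_pos hc _)
        ((innerRadius_le_half _ _ _).trans (by norm_num))]
      exact lintegral_mono_set (fiber_subset_annulus_innerRadius hsub h1 h2 h3 hw3 hw4)
    · have : {z | (z, w) ∈ Ω} = ∅ := eq_empty_of_forall_notMem fun z hz =>
        hw (mem_annulus.2 ⟨(hsub hz).2.1, (hsub hz).2.2⟩)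
      rw [indicator_of_notMem hw, this, Measure.restrict_empty, lintegral_zero_measure]
  rw [Measure.volume_eq_prod, setLIntegral_prod_eq_lintegral_fiber
    (g := fun z => ENNReal.ofReal (‖z‖⁻¹ ^ 2)) hΩ (by fun_prop)]
  refine (lintegral_mono_ae hfiber).trans_lt ?_
  rw [lintegral_indicator (measurableSet_annulus 1 6)]
  exact lintegral_annulus_lt_top (by fun_prop) zero_le_one
    ((integrableOn_log_four_sub_log_innerRadius hs hc 1 6).const_mul _)

theorem lintegral_inv_norm_sq_mul_logPlus_eq_top {s q ε : ℝ} {Ω : Set (ℂ × ℂ)}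
    (hΩ : MeasurableSet Ω) (hq : 0 ≤ q) (hsq : 1 ≤ s * (q + 1)) (hε : 0 < ε) (hε1 : ε ≤ 1)
    (h2 : ∀ w : ℂ, 0 < |‖w‖ - 3| → |‖w‖ - 3| ≤ ε →
      {z : ℂ | exp (-(|‖w‖ - 3| ^ (-s))) < ‖z‖ ∧ ‖z‖ < 1} ⊆ {z : ℂ | (z, w) ∈ Ω}) :
    ∫⁻ p in Ω, ENNReal.ofReal (‖p.1‖⁻¹ ^ 2 * logPlus ‖p.1‖⁻¹ ^ q) = ⊤ := by
  have hk : 0 < 2 * π * 2 ^ (-(q + 1)) := by positivity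
  rw [Measure.volume_eq_prod, setLIntegral_prod_eq_lintegral_fiber
    (g := fun z => ENNReal.ofReal (‖z‖⁻¹ ^ 2 * logPlus ‖z‖⁻¹ ^ q)) hΩ (by fun_prop), eq_top_iff]
  calc ⊤ = ∫⁻ w in annulus 3 (3 + ε), ENNReal.ofReal (2 * π * 2 ^ (-(q + 1)) * (‖w‖ - 3)⁻¹) :=
        (lintegral_annulus_inv_sub_eq_top (by norm_num) hε hk).symm
    _ ≤ ∫⁻ w in annulus 3 (3 + ε), ∫⁻ z in {z | (z, w) ∈ Ω},
          ENNReal.ofReal (‖z‖⁻¹ ^ 2 * logPlus ‖z‖⁻¹ ^ q) :=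
        setLIntegral_mono' (measurableSet_annulus _ _) fun w hw => ?_
    _ ≤ _ := setLIntegral_le_lintegral _ _
  obtain ⟨ht, htε⟩ : 0 < ‖w‖ - 3 ∧ ‖w‖ - 3 < ε := by
    rw [mem_annulus] at hw; constructor <;> linarith [hw.1, hw.2]
  have habs : |‖w‖ - 3| = ‖w‖ - 3 := abs_of_pos ht
  calc ENNReal.ofReal (2 * π * 2 ^ (-(q + 1)) * (‖w‖ - 3)⁻¹)
      ≤ ENNReal.ofReal (2 * π * ((‖w‖ - 3) ^ (-s) / 2) ^ (q + 1)) := by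
        rw [mul_assoc]
        gcongr
        exact two_rpow_neg_mul_inv_le ht (by linarith) hsq
    _ ≤ _ := le_lintegral_annulus_inv_norm_sq_mul_logPlus hq (rpow_pos_of_pos ht _)
    _ ≤ _ := by
        have hann := h2 w (by rwa [habs]) (by rw [habs]; exact htε.le)
        rw [habs] at hann
        exact lintegral_mono_set hann

theorem stmt16_general (s q : ℝ) (hs : s ∈ Set.Ioo (0:ℝ) 1) (hq : 1 / s - 1 ≤ q)
    (Ω : Set (ℂ × ℂ)) (hopen : IsOpen Ω)
    (hsub : Ω ⊆ {p : ℂ × ℂ |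
      ‖p.1‖ < 4 ∧ 1 < ‖p.2‖ ∧ ‖p.2‖ < 6})
    (ε c : ℝ) (hε : ε ∈ Set.Ioo (0:ℝ) (1/2)) (hc : 0 < c)
    (h1 : ∀ w : ℂ, ε ≤ |‖w‖ - 3| → ε ≤ |‖w‖ - 4| →
      ∀ z : ℂ, ‖z‖ ≤ c → (z, w) ∉ Ω)
    (h2 : ∀ w : ℂ, 0 < |‖w‖ - 3| → |‖w‖ - 3| ≤ ε →
      ({z : ℂ | Real.exp (-(|‖w‖ - 3| ^ (-s))) < ‖z‖ ∧
          ‖z‖ < 1} ⊆ {z : ℂ | (z, w) ∈ Ω} ∧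
       {z : ℂ | (z, w) ∈ Ω} ⊆ {z : ℂ |
          (1/2) * Real.exp (-2 * |‖w‖ - 3| ^ (-s)) < ‖z‖ ∧
          ‖z‖ < 4}))
    (h3 : ∀ w : ℂ, 0 < |‖w‖ - 4| → |‖w‖ - 4| ≤ ε →
      {z : ℂ | (z, w) ∈ Ω} ⊆ {z : ℂ |
        (1/2) * Real.exp (-2 * |‖w‖ - 4| ^ (-s)) < ‖z‖ ∧
        ‖z‖ < 4}) :
    DifferentiableOn ℂ (fun p : ℂ × ℂ => (p.1)⁻¹) Ω ∧
    (∫⁻ p in Ω, ENNReal.ofReal (‖(p.1)⁻¹‖ ^ 2)) < ⊤ ∧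
    (∫⁻ p in Ω, ENNReal.ofReal (‖(p.1)⁻¹‖ ^ 2 * logPlus ‖(p.1)⁻¹‖ ^ q)) = ⊤ := by
  obtain ⟨hs0, hs1⟩ := hs
  have hsq : 1 ≤ s * (q + 1) := by
    rw [mul_comm]; exact (div_le_iff₀ hs0).1 (by linarith)
  have hq0 : 0 ≤ q := by linarith [(one_lt_div hs0).2 hs1]
  have h2in := fun w h h' => (h2 w h h').1
  have h2out := fun w h h' => (h2 w h h').2
  have hzero : ∀ w : ℂ, ‖w‖ ≠ 3 → ‖w‖ ≠ 4 → ((0 : ℂ), w) ∉ Ω := fun w hw3 hw4 h0 =>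
    lt_asymm (innerRadius_pos hc ‖w‖) <| by
      simpa using (mem_annulus.1 (fiber_subset_annulus_innerRadius hsub h1 h2out h3 hw3 hw4 h0)).1
  simp only [norm_inv]
  exact ⟨fun p hp =>
      (differentiableAt_fst.inv (hopen.fst_ne_zero_of_mem hzero hp)).differentiableWithinAt,
    lintegral_inv_norm_sq_lt_top hopen.measurableSet hs1 hc hsub h1 h2out h3,
    lintegral_inv_norm_sq_mul_logPlus_eq_top hopen.measurableSet hq0 hsq hε.1
      (by linarith [hε.2]) h2in⟩

/-- **Lemma 4.1.** Let `s ∈ (0,1)`, `q ≥ 1/s - 1`, and let `Ω ⊆ {|z| < 4, 1 < |w| < 6} ⊆ ℂ²`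
be a domain whose fibers `Ω_w` depend only on `|w|`, avoid a disc `{|z| ≤ c}` away from
`|w| ∈ {3,4}`, and for `t = |w|-3` (resp. `t = |w|-4`) with `0 < |t| ≤ ε` satisfy
`{e^{-|t|^{-s}} < |z| < 1} ⊆ Ω_w ⊆ {(1/2)e^{-2|t|^{-s}} < |z| < 4}` (resp. the upper bound).
Then `1/z ∈ A²(Ω)` but `1/z ∉ A²(log A)^q(Ω)`. -/
theorem stmt16 (s q : ℝ) (hs : s ∈ Set.Ioo (0:ℝ) 1) (hq : 1 / s - 1 ≤ q)
    (Ω : Set (ℂ × ℂ)) (hopen : IsOpen Ω) (hconn : IsConnected Ω)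
    (hsub : Ω ⊆ {p : ℂ × ℂ |
      ‖p.1‖ < 4 ∧ 1 < ‖p.2‖ ∧ ‖p.2‖ < 6})
    (hfib : ∀ w w' : ℂ, ‖w‖ = ‖w'‖ →
      {z : ℂ | (z, w) ∈ Ω} = {z : ℂ | (z, w') ∈ Ω})
    (ε c : ℝ) (hε : ε ∈ Set.Ioo (0:ℝ) (1/2)) (hc : 0 < c)
    (h1 : ∀ w : ℂ, ε ≤ |‖w‖ - 3| → ε ≤ |‖w‖ - 4| →
      ∀ z : ℂ, ‖z‖ ≤ c → (z, w) ∉ Ω)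
    (h2 : ∀ w : ℂ, 0 < |‖w‖ - 3| → |‖w‖ - 3| ≤ ε →
      ({z : ℂ | Real.exp (-(|‖w‖ - 3| ^ (-s))) < ‖z‖ ∧
          ‖z‖ < 1} ⊆ {z : ℂ | (z, w) ∈ Ω} ∧
       {z : ℂ | (z, w) ∈ Ω} ⊆ {z : ℂ |
          (1/2) * Real.exp (-2 * |‖w‖ - 3| ^ (-s)) < ‖z‖ ∧
          ‖z‖ < 4}))
    (h3 : ∀ w : ℂ, 0 < |‖w‖ - 4| → |‖w‖ - 4| ≤ ε →
      {z : ℂ | (z, w) ∈ Ω} ⊆ {z : ℂ |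
        (1/2) * Real.exp (-2 * |‖w‖ - 4| ^ (-s)) < ‖z‖ ∧
        ‖z‖ < 4}) :
    DifferentiableOn ℂ (fun p : ℂ × ℂ => (p.1)⁻¹) Ω ∧
    (∫⁻ p in Ω, ENNReal.ofReal (‖(p.1)⁻¹‖ ^ 2)) < ⊤ ∧
    (∫⁻ p in Ω, ENNReal.ofReal (‖(p.1)⁻¹‖ ^ 2 * logPlus ‖(p.1)⁻¹‖ ^ q)) = ⊤ :=
  stmt16_general s q hs hq Ω hopen hsub ε c hε hc h1 h2 h3
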